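/- If σ : M → N is a surjective strong map between matroids with rank(M) = rank(N), then M and N are isomorphic (their simplifications coincide; equivalently, σ^# : L(M) → L(N) is a lattice isomorphism). -/

import Mathlib

open Finset

/-- A finite matroid on ground set `E`, presented by its rank function. -/
structure FinMatroid (E : Type) [DecidableEq E] [Fintype E] where
  rk : Finset E → ℕ
  rk_le_card : ∀ X, rk X ≤ X.card
  rk_mono : ∀ ⦃X Y : Finset E⦄, X ⊆ Y → rk X ≤ rk Y
  rk_submod : ∀ X Y, rk (X ∪ Y) + rk (X ∩ Y) ≤ rk X + rk Y

namespace FinMatroid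

variable {E α β γ : Type} [DecidableEq E] [Fintype E]

/-- A set is independent iff its rank equals its cardinality. -/
def Indep (M : FinMatroid E) (X : Finset E) : Prop := M.rk X = X.card

/-- The closure of a set: all elements whose insertion does not raise the rank. -/
def closure (M : FinMatroid E) (X : Finset E) : Finset E :=
  univ.filter fun e => M.rk (insert e X) = M.rk X

/-- A flat is a closed set. -/
def IsFlat (M : FinMatroid E) (X : Finset E) : Prop := M.closure X = X

instance (M : FinMatroid E) (X : Finset E) : Decidable (M.IsFlat X) :=
  decidable_of_iff (M.closure X = X) Iff.rfl

/-- The rank of the matroid. -/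
def rank (M : FinMatroid E) : ℕ := M.rk univ

/-- The image of a finite set under a map into `E(N) ∪ {o}`; the zero element `o`
is modelled by `none` and contributes nothing to the image. -/
def optImage [DecidableEq β] (τ : α → Option β) (X : Finset α) : Finset β :=
  X.biUnion fun a => (τ a).toFinset

variable [DecidableEq α] [Fintype α] [DecidableEq β] [Fintype β]

/-- `τ : E(M) ∪ o → E(N) ∪ o` (with `o ↦ o`) is a weak map iff the rank of the image of any
set is at most the rank of the set. -/
def IsWeakMap (M : FinMatroid α) (N : FinMatroid β) (τ : α → Option β) : Prop :=
  ∀ X : Finset α, N.rk (optImage τ X) ≤ M.rk X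

/-- `τ` is surjective if every (nonzero) element of `E(N)` is in the image. -/
def IsSurjMap (τ : α → Option β) : Prop := ∀ b : β, ∃ a : α, τ a = some b

/-- Preimage of `Y ∪ {o}` under `τ`, intersected with `E(M)`. -/
def optPreimage (τ : α → Option β) (Y : Finset β) : Finset α :=
  univ.filter fun a => ∀ b, τ a = some b → b ∈ Y

/-- A strong map: preimages of flats are flats. -/
def IsStrongMap (M : FinMatroid α) (N : FinMatroid β) (τ : α → Option β) : Prop :=
  ∀ Y : Finset β, N.IsFlat Y → M.IsFlat (optPreimage τ Y)

/-- The induced map `τ^#` on flats, `X ↦ cl_N(τ(X))`. -/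
def hmap (N : FinMatroid β) (τ : α → Option β) (X : Finset α) : Finset β :=
  N.closure (optImage τ X)

/-- The Möbius function `μ(0̂, X)` of the lattice of flats of `M`, where `0̂ = cl(∅)`. -/
def mu (M : FinMatroid E) (X : Finset E) : ℤ :=
  if X = M.closure ∅ then 1
  else - ∑ Y ∈ (X.powerset.filter fun Y => M.IsFlat Y ∧ Y ≠ X).attach, M.mu Y.1
termination_by X.card
decreasing_by
  have h := Y.2
  simp only [Finset.mem_filter, Finset.mem_powerset] at h
  exact Finset.card_lt_card (h.1.ssubset_of_ne h.2.2)

/-- The `k`-th Whitney number of the first kind. -/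
def whitney (M : FinMatroid E) (k : ℕ) : ℕ :=
  ∑ X ∈ univ.powerset.filter (fun X => M.IsFlat X ∧ M.rk X = k), (M.mu X).natAbs

end FinMatroid


namespace FinMatroid

section Lemmas

variable {E : Type} [DecidableEq E] [Fintype E] (M : FinMatroid E)

lemma rk_empty : M.rk ∅ = 0 :=
  Nat.le_zero.mp (by simpa using M.rk_le_card ∅)

lemma rk_insert_le (X : Finset E) (e : E) :
    M.rk (insert e X) ≤ M.rk X + 1 := by
  have h := M.rk_submod {e} X
  have h2 : M.rk {e} ≤ 1 := by simpa using M.rk_le_card {e}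
  rw [← Finset.insert_eq] at h
  omega

lemma mem_closure {X : Finset E} {e : E} :
    e ∈ M.closure X ↔ M.rk (insert e X) = M.rk X := by
  simp [closure]

lemma subset_closure (X : Finset E) : X ⊆ M.closure X := by
  intro e he
  rw [mem_closure, Finset.insert_eq_self.mpr he]

lemma rk_union_eq {X S : Finset E} (h : ∀ e ∈ S, M.rk (insert e X) = M.rk X) :
    M.rk (X ∪ S) = M.rk X := by
  induction S using Finset.induction_on with
  | empty => simp
  | @insert a S' ha ih =>
    have hS' : M.rk (X ∪ S') = M.rk X := ih fun e he => h e (Finset.mem_insert_of_mem he)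
    have ha' : M.rk (insert a X) = M.rk X := h a (Finset.mem_insert_self a S')
    have hsub := M.rk_submod (X ∪ S') (insert a X)
    have hu : (X ∪ S') ∪ insert a X = insert a (X ∪ S') := by
      ext x; simp [Finset.mem_insert, Finset.mem_union]; tauto
    have hi : X ⊆ (X ∪ S') ∩ insert a X :=
      Finset.subset_inter Finset.subset_union_left (Finset.subset_insert _ _)
    have hi' : M.rk X ≤ M.rk ((X ∪ S') ∩ insert a X) := M.rk_mono hi
    rw [hu] at hsub
    have hX : X ∪ insert a S' = insert a (X ∪ S') := Finset.union_insert a X S'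
    have hmono : M.rk X ≤ M.rk (insert a (X ∪ S')) :=
      M.rk_mono (Finset.subset_union_left.trans (Finset.subset_insert _ _))
    rw [hX]
    omega

lemma rk_closure (X : Finset E) : M.rk (M.closure X) = M.rk X := by
  have h1 : M.rk (X ∪ M.closure X) = M.rk X :=
    M.rk_union_eq fun e he => (M.mem_closure).mp he
  have h2 : M.rk (M.closure X) ≤ M.rk (X ∪ M.closure X) :=
    M.rk_mono Finset.subset_union_right
  have h3 : M.rk X ≤ M.rk (M.closure X) := M.rk_mono (M.subset_closure X)
  omega

lemma closure_mono {X Y : Finset E} (h : X ⊆ Y) : M.closure X ⊆ M.closure Y := by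
  intro e he
  rw [mem_closure] at he ⊢
  have hsub := M.rk_submod (insert e X) Y
  have hu : insert e X ∪ Y = insert e Y := by
    ext x; simp only [Finset.mem_insert, Finset.mem_union]
    constructor
    · rintro (⟨h1 | h1⟩ | h1)
      · exact Or.inl h1
      · exact Or.inr (h h1)
      · exact Or.inr h1
    · rintro (h1 | h1)
      · exact Or.inl (Or.inl h1)
      · exact Or.inr h1
  have hi : X ⊆ insert e X ∩ Y := Finset.subset_inter (Finset.subset_insert _ _) h
  have hi' : M.rk X ≤ M.rk (insert e X ∩ Y) := M.rk_mono hi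
  have hmono : M.rk Y ≤ M.rk (insert e Y) := M.rk_mono (Finset.subset_insert _ _)
  rw [hu] at hsub
  omega

lemma closure_isFlat (X : Finset E) : M.IsFlat (M.closure X) := by
  apply Finset.Subset.antisymm _ (M.subset_closure _)
  intro e he
  rw [mem_closure] at he ⊢
  rw [M.rk_closure] at he
  have h1 : M.rk (insert e X) ≤ M.rk (insert e (M.closure X)) :=
    M.rk_mono (Finset.insert_subset_insert e (M.subset_closure X))
  have h2 : M.rk X ≤ M.rk (insert e X) := M.rk_mono (Finset.subset_insert _ _)
  omega

lemma univ_isFlat : M.IsFlat (univ : Finset E) :=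
  Finset.Subset.antisymm (Finset.subset_univ _) (M.subset_closure _)

lemma flat_rk_lt {X Z : Finset E} (hX : M.IsFlat X) (hsub : X ⊆ Z) (hne : X ≠ Z) :
    M.rk X < M.rk Z := by
  obtain ⟨e, heZ, heX⟩ := Finset.exists_of_ssubset (hsub.ssubset_of_ne hne)
  have h1 : M.rk (insert e X) ≠ M.rk X := by
    intro h
    exact heX (hX ▸ (M.mem_closure).mpr h)
  have h2 : M.rk X ≤ M.rk (insert e X) := M.rk_mono (Finset.subset_insert _ _)
  have h3 : M.rk (insert e X) ≤ M.rk Z := M.rk_mono (Finset.insert_subset heZ hsub)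
  omega

/-- Cover lemma: a flat of rank below the matroid rank is covered by a bigger flat. -/
lemma exists_cover {Z : Finset E} (hZ : M.IsFlat Z) (hrk : M.rk Z < M.rank) :
    ∃ Z' : Finset E, M.IsFlat Z' ∧ Z ⊆ Z' ∧ Z ≠ Z' ∧ M.rk Z' = M.rk Z + 1 := by
  have he : ∃ e : E, M.rk (insert e Z) ≠ M.rk Z := by
    by_contra h
    push_neg at h
    have : (univ : Finset E) ⊆ M.closure Z := fun e _ => (M.mem_closure).mpr (h e)
    have : M.rank ≤ M.rk Z := by
      have := M.rk_mono this
      rwa [M.rk_closure, rank] at *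
    omega
  obtain ⟨e, he⟩ := he
  have h1 : M.rk Z ≤ M.rk (insert e Z) := M.rk_mono (Finset.subset_insert _ _)
  have h2 := M.rk_insert_le Z e
  have h3 : M.rk (insert e Z) = M.rk Z + 1 := by omega
  refine ⟨M.closure (insert e Z), M.closure_isFlat _, ?_, ?_, ?_⟩
  · exact (Finset.subset_insert _ _).trans (M.subset_closure _)
  · intro h
    have : M.rk Z = M.rk (M.closure (insert e Z)) := by rw [← h]
    rw [M.rk_closure] at this
    omega
  · rw [M.rk_closure, h3]

lemma indep_of_forall_erase :
    ∀ n (X : Finset E), X.card ≤ n → (∀ e ∈ X, M.rk (X.erase e) < M.rk X) →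
      M.rk X = X.card := by
  intro n
  induction n with
  | zero =>
    intro X hX _
    interval_cases h : X.card
    · rw [Finset.card_eq_zero.mp h]; simp [M.rk_empty]
  | succ n ih =>
    intro X hX h
    rcases Finset.eq_empty_or_nonempty X with rfl | ⟨e, he⟩
    · simp [M.rk_empty]
    have hX' := h e he
    have hins : insert e (X.erase e) = X := Finset.insert_erase he
    have h2 : M.rk X ≤ M.rk (X.erase e) + 1 := by
      have := M.rk_insert_le (X.erase e) e
      rwa [hins] at this
    have hrkX' : M.rk (X.erase e) + 1 = M.rk X := by omega
    have hcard : (X.erase e).card = X.card - 1 := Finset.card_erase_of_mem he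
    have hcard' : (X.erase e).card ≤ n := by
      have := Finset.card_pos.mpr ⟨e, he⟩
      omega
    have hforall : ∀ f ∈ X.erase e, M.rk ((X.erase e).erase f) < M.rk (X.erase e) := by
      intro f hf
      have hfe : f ≠ e := Finset.ne_of_mem_erase hf
      have hfX : f ∈ X := Finset.mem_of_mem_erase hf
      have hXf := h f hfX
      have hXf2 : M.rk X ≤ M.rk (X.erase f) + 1 := by
        have := M.rk_insert_le (X.erase f) f
        rwa [Finset.insert_erase hfX] at this
      have hsub := M.rk_submod (X.erase e) (X.erase f)
      have hu : X.erase e ∪ X.erase f = X := by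
        ext x
        simp only [Finset.mem_union, Finset.mem_erase]
        constructor
        · rintro (⟨_, hx⟩ | ⟨_, hx⟩) <;> exact hx
        · intro hx
          by_cases hxe : x = e
          · exact Or.inr ⟨by rw [hxe]; exact (Ne.symm hfe), hx⟩
          · exact Or.inl ⟨hxe, hx⟩
      have hi : X.erase e ∩ X.erase f = (X.erase e).erase f := by
        ext x
        simp only [Finset.mem_inter, Finset.mem_erase]
        tauto
      rw [hu, hi] at hsub
      omega
    have := ih (X.erase e) hcard' hforall
    have hpos := Finset.card_pos.mpr ⟨e, he⟩
    omega

lemma exists_basis :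
    ∀ n (X : Finset E), X.card ≤ n →
      ∃ B : Finset E, B ⊆ X ∧ M.rk B = B.card ∧ M.rk B = M.rk X := by
  intro n
  induction n with
  | zero =>
    intro X hX
    exact ⟨X, Finset.Subset.refl X, by
      have := M.rk_le_card X; omega, rfl⟩
  | succ n ih =>
    intro X hX
    by_cases h : ∃ e ∈ X, M.rk (X.erase e) = M.rk X
    · obtain ⟨e, he, hrk⟩ := h
      have hcard : (X.erase e).card ≤ n := by
        have := Finset.card_erase_of_mem he
        have := Finset.card_pos.mpr ⟨e, he⟩
        omega
      obtain ⟨B, hB1, hB2, hB3⟩ := ih (X.erase e) hcard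
      exact ⟨B, hB1.trans (Finset.erase_subset _ _), hB2, by rw [hB3, hrk]⟩
    · push_neg at h
      have h' : ∀ e ∈ X, M.rk (X.erase e) < M.rk X := by
        intro e he
        have := M.rk_mono (Finset.erase_subset e X)
        exact lt_of_le_of_ne this (h e he)
      exact ⟨X, Finset.Subset.refl X,
        M.indep_of_forall_erase (n + 1) X hX h', rfl⟩

end Lemmas

section Maps

variable {α β : Type} [DecidableEq α] [Fintype α] [DecidableEq β] [Fintype β]

lemma mem_optImage {σ : α → Option β} {X : Finset α} {b : β} :
    b ∈ optImage σ X ↔ ∃ a ∈ X, σ a = some b := by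
  simp [optImage, Finset.mem_biUnion, Option.mem_toFinset, Option.mem_def]

lemma mem_optPreimage {σ : α → Option β} {Y : Finset β} {a : α} :
    a ∈ optPreimage σ Y ↔ ∀ b, σ a = some b → b ∈ Y := by
  simp [optPreimage]

lemma optImage_mono {σ : α → Option β} {X X' : Finset α} (h : X ⊆ X') :
    optImage σ X ⊆ optImage σ X' := by
  intro b hb
  rw [mem_optImage] at hb ⊢
  obtain ⟨a, ha, hab⟩ := hb
  exact ⟨a, h ha, hab⟩

lemma optPreimage_mono {σ : α → Option β} {Y Y' : Finset β} (h : Y ⊆ Y') :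
    optPreimage σ Y ⊆ optPreimage σ Y' := by
  intro a ha
  rw [mem_optPreimage] at ha ⊢
  exact fun b hb => h (ha b hb)

lemma optImage_optPreimage {σ : α → Option β} (hs : IsSurjMap σ) (Y : Finset β) :
    optImage σ (optPreimage σ Y) = Y := by
  ext b
  rw [mem_optImage]
  constructor
  · rintro ⟨a, ha, hab⟩
    exact (mem_optPreimage.mp ha) b hab
  · intro hb
    obtain ⟨a, ha⟩ := hs b
    refine ⟨a, mem_optPreimage.mpr ?_, ha⟩
    intro b' hb'
    rw [ha] at hb'
    exact (Option.some_injective _ hb') ▸ hb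

lemma optPreimage_univ {σ : α → Option β} : optPreimage σ (univ : Finset β) = univ := by
  ext a; simp [mem_optPreimage]

lemma card_optImage_le (σ : α → Option β) (X : Finset α) :
    (optImage σ X).card ≤ X.card := by
  refine (Finset.card_biUnion_le).trans ?_
  have : ∀ a ∈ X, ((σ a).toFinset).card ≤ 1 := by
    intro a _
    cases σ a <;> simp
  calc ∑ a ∈ X, ((σ a).toFinset).card ≤ ∑ _a ∈ X, 1 := Finset.sum_le_sum this
    _ = X.card := by simp

variable {M : FinMatroid α} {N : FinMatroid β} {σ : α → Option β}

lemma subset_preimage_hmap (X : Finset α) :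
    X ⊆ optPreimage σ (hmap N σ X) := by
  intro a ha
  rw [mem_optPreimage]
  intro b hb
  exact N.subset_closure _ (mem_optImage.mpr ⟨a, ha, hb⟩)

lemma image_closure_subset (hst : IsStrongMap M N σ) (X : Finset α) :
    optImage σ (M.closure X) ⊆ N.closure (optImage σ X) := by
  have hflat : M.IsFlat (optPreimage σ (N.closure (optImage σ X))) :=
    hst _ (N.closure_isFlat _)
  have hX : X ⊆ optPreimage σ (N.closure (optImage σ X)) := subset_preimage_hmap X
  have hcl : M.closure X ⊆ optPreimage σ (N.closure (optImage σ X)) := by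
    have := M.closure_mono hX
    rwa [hflat] at this
  intro b hb
  obtain ⟨a, ha, hab⟩ := mem_optImage.mp hb
  exact (mem_optPreimage.mp (hcl ha)) b hab

/-- Strong maps are weak maps. -/
lemma weak_of_strong (hst : IsStrongMap M N σ) (X : Finset α) :
    N.rk (optImage σ X) ≤ M.rk X := by
  obtain ⟨B, hBX, hBi, hBrk⟩ := M.exists_basis X.card X le_rfl
  have hXcl : X ⊆ M.closure B := by
    intro e he
    rw [mem_closure]
    have h1 : M.rk (insert e B) ≤ M.rk X := M.rk_mono (Finset.insert_subset he hBX)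
    have h2 : M.rk B ≤ M.rk (insert e B) := M.rk_mono (Finset.subset_insert _ _)
    omega
  have h1 : optImage σ X ⊆ N.closure (optImage σ B) :=
    (optImage_mono hXcl).trans (image_closure_subset hst B)
  calc N.rk (optImage σ X) ≤ N.rk (N.closure (optImage σ B)) := N.rk_mono h1
    _ = N.rk (optImage σ B) := N.rk_closure _
    _ ≤ (optImage σ B).card := N.rk_le_card _
    _ ≤ B.card := card_optImage_le σ B
    _ = M.rk X := by omega

lemma preimage_ssubset (hs : IsSurjMap σ) {Z Z' : Finset β} (hsub : Z ⊆ Z')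
    (hne : Z ≠ Z') : optPreimage σ Z ⊆ optPreimage σ Z' ∧ optPreimage σ Z ≠ optPreimage σ Z' := by
  refine ⟨optPreimage_mono hsub, ?_⟩
  obtain ⟨b, hbZ', hbZ⟩ := Finset.exists_of_ssubset (hsub.ssubset_of_ne hne)
  obtain ⟨a, ha⟩ := hs b
  intro h
  have h1 : a ∈ optPreimage σ Z' := mem_optPreimage.mpr
    (fun b' hb' => by rw [ha] at hb'; exact (Option.some_injective _ hb') ▸ hbZ')
  rw [← h] at h1
  exact hbZ ((mem_optPreimage.mp h1) b ha)

/-- The chain lemma: ranks of preimage-flats above a given flat. -/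
lemma chain_lemma (hst : IsStrongMap M N σ) (hs : IsSurjMap σ) :
    ∀ k (Z : Finset β), N.IsFlat Z → N.rk Z + k ≤ N.rank →
      M.rk (optPreimage σ Z) + k ≤ M.rank := by
  intro k
  induction k with
  | zero =>
    intro Z _ _
    simpa [rank] using M.rk_mono (Finset.subset_univ (optPreimage σ Z))
  | succ k ih =>
    intro Z hZ hk
    obtain ⟨Z', hZ'flat, hsub, hne, hrk⟩ := N.exists_cover hZ (by omega)
    have hih := ih Z' hZ'flat (by omega)
    obtain ⟨hpsub, hpne⟩ := preimage_ssubset hs hsub hne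
    have hlt : M.rk (optPreimage σ Z) < M.rk (optPreimage σ Z') :=
      M.flat_rk_lt (hst Z hZ) hpsub hpne
    omega

/-- Under equal rank, the rank of a preimage flat is at most the rank of the flat. -/
lemma rk_preimage_le (hst : IsStrongMap M N σ) (hs : IsSurjMap σ)
    (hr : M.rank = N.rank) {Z : Finset β} (hZ : N.IsFlat Z) :
    M.rk (optPreimage σ Z) ≤ N.rk Z := by
  have hle : N.rk Z ≤ N.rank := N.rk_mono (Finset.subset_univ Z)
  have := chain_lemma hst hs (N.rank - N.rk Z) Z hZ (by omega)
  omega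

end Maps

end FinMatroid

/-- a surjective strong map `σ : M → N` between matroids of equal rank
induces a lattice isomorphism `σ^# : L(M) → L(N)`; i.e. `σ^#` is surjective onto the
flats of `N` and is an order-embedding on the flats of `M` (so `M ≅ N`, their
simplifications coincide). -/
theorem stmt_7 {α β : Type} [DecidableEq α] [Fintype α] [DecidableEq β] [Fintype β]
    (M : FinMatroid α) (N : FinMatroid β) (σ : α → Option β)
    (hst : FinMatroid.IsStrongMap M N σ) (hs : FinMatroid.IsSurjMap σ)
    (hr : M.rank = N.rank) :
    (∀ X X' : Finset α, M.IsFlat X → M.IsFlat X' →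
        (FinMatroid.hmap N σ X ⊆ FinMatroid.hmap N σ X' ↔ X ⊆ X')) ∧
    (∀ Y : Finset β, N.IsFlat Y → ∃ X : Finset α, M.IsFlat X ∧ FinMatroid.hmap N σ X = Y) := by
  constructor
  · intro X X' hX hX'
    constructor
    · intro h
      have hXsub : X ⊆ FinMatroid.optPreimage σ (FinMatroid.hmap N σ X') :=
        (FinMatroid.subset_preimage_hmap X).trans (FinMatroid.optPreimage_mono h)
      have hX'sub : X' ⊆ FinMatroid.optPreimage σ (FinMatroid.hmap N σ X') :=
        FinMatroid.subset_preimage_hmap X'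
      have hrk : M.rk (FinMatroid.optPreimage σ (FinMatroid.hmap N σ X')) ≤ M.rk X' := by
        have h1 := FinMatroid.rk_preimage_le hst hs hr
          (N.closure_isFlat (FinMatroid.optImage σ X'))
        have h2 : N.rk (N.closure (FinMatroid.optImage σ X'))
            = N.rk (FinMatroid.optImage σ X') := N.rk_closure _
        have h3 := FinMatroid.weak_of_strong hst X'
        show M.rk (FinMatroid.optPreimage σ (N.closure (FinMatroid.optImage σ X'))) ≤ M.rk X'
        omega
      have heq : FinMatroid.optPreimage σ (FinMatroid.hmap N σ X') = X' := by
        by_contra hne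
        have := M.flat_rk_lt hX' hX'sub (fun hh => hne hh.symm)
        omega
      rw [heq] at hXsub
      exact hXsub
    · intro h
      exact N.closure_mono (FinMatroid.optImage_mono h)
  · intro Y hY
    refine ⟨FinMatroid.optPreimage σ Y, hst Y hY, ?_⟩
    rw [FinMatroid.hmap, FinMatroid.optImage_optPreimage hs, hY]
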